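/- (Error formula for Lipschitz semigroups) Let (D, d) be a metric space and S : [0,∞) × D → D a map with S_0 u = u and S_{t+s} u = S_t(S_s u) for all t, s ≥ 0 and u ∈ D, satisfying d(S_t u, S_t v) ≤ L·d(u,v) for all t ≥ 0, u, v ∈ D, and such that t ↦ S_t u is continuous for each u. Let w : [0,T] → D be Lipschitz continuous. Then d(w(T), S_T w(0)) ≤ L · ∫₀^T liminf_{h→0+} [d(w(t+h), S_h w(t)) / h] dt, where the integral is the (upper) Lebesgue integral of the nonnegative integrand. -/

import Mathlib

open MeasureTheory Set Filter
open scoped ENNReal Topology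


section AuxSG
variable {D : Type*} [MetricSpace D]

private lemma dist_iterate_aux (L : ℝ) (S : ℝ → D → D)
    (h_id : ∀ u, S 0 u = u)
    (h_semigroup : ∀ t s : ℝ, 0 ≤ t → 0 ≤ s → ∀ u, S (t + s) u = S t (S s u))
    (h_lip : ∀ t : ℝ, 0 ≤ t → ∀ u v, dist (S t u) (S t v) ≤ L * dist u v)
    (u : D) {h' : ℝ} (hh' : 0 ≤ h') :
    ∀ n : ℕ, dist u (S (n * h') u) ≤ n * L * dist u (S h' u) := by
  intro n
  induction n with
  | zero => simp [h_id]
  | succ n ih =>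
    have hsg : S (((n:ℕ)+1 : ℕ) * h') u = S ((n:ℝ) * h') (S h' u) := by
      rw [show (((n:ℕ)+1:ℕ):ℝ) * h' = (n:ℝ)*h' + h' by push_cast; ring]
      exact h_semigroup _ _ (by positivity) hh' u
    calc dist u (S (((n:ℕ)+1:ℕ) * h') u)
        ≤ dist u (S ((n:ℝ)*h') u) + dist (S ((n:ℝ)*h') u) (S ((n:ℝ)*h') (S h' u)) := by
          rw [hsg]; exact dist_triangle _ _ _
      _ ≤ (n:ℝ) * L * dist u (S h' u) + L * dist u (S h' u) :=
          add_le_add ih (h_lip _ (by positivity) _ _)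
      _ = (((n:ℕ)+1:ℕ):ℝ) * L * dist u (S h' u) := by push_cast; ring

private lemma scale_aux (L : ℝ) (hL : 1 ≤ L) (S : ℝ → D → D)
    (h_id : ∀ u, S 0 u = u)
    (h_semigroup : ∀ t s : ℝ, 0 ≤ t → 0 ≤ s → ∀ u, S (t + s) u = S t (S s u))
    (h_lip : ∀ t : ℝ, 0 ≤ t → ∀ u v, dist (S t u) (S t v) ≤ L * dist u v)
    (h_cont : ∀ u, ContinuousOn (fun t => S t u) (Ici 0))
    (u : D) {c : ℝ} (hc : 0 < c)
    (hyp : ∀ δ > (0:ℝ), ∃ h', 0 < h' ∧ h' < δ ∧ dist u (S h' u) < c * h') :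
    ∀ h : ℝ, 0 < h → dist u (S h u) ≤ L^2 * c * h := by
  intro h hh
  have hL0 : (0:ℝ) ≤ L := zero_le_one.trans hL
  refine le_of_forall_pos_le_add fun ε hε => ?_
  have hc0 : ContinuousWithinAt (fun t => S t u) (Ici 0) 0 := (h_cont u) 0 self_mem_Ici
  rw [Metric.continuousWithinAt_iff] at hc0
  obtain ⟨δ, hδpos, hδ⟩ := hc0 ε hε
  obtain ⟨h', h'pos, h'lt, h'dist⟩ := hyp (min δ h) (lt_min hδpos hh)
  have h'δ : h' < δ := lt_of_lt_of_le h'lt (min_le_left _ _)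
  have h'h : h' < h := lt_of_lt_of_le h'lt (min_le_right _ _)
  set n : ℕ := ⌊h / h'⌋₊ with hn
  have hdiv : (0:ℝ) ≤ h / h' := by positivity
  have hnh' : (n:ℝ) * h' ≤ h := by
    have h1 := Nat.floor_le hdiv
    calc (n:ℝ)*h' ≤ (h/h')*h' := by nlinarith
    _ = h := by field_simp
  have hr1 : h - (n:ℝ)*h' < h' := by
    have h2 : h/h' < (n:ℝ)+1 := by exact_mod_cast Nat.lt_floor_add_one (h / h')
    have h3 : h < ((n:ℝ)+1)*h' := by
      have := (div_lt_iff₀ h'pos).mp h2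
      linarith
    linarith
  have hr0 : (0:ℝ) ≤ h - (n:ℝ)*h' := by linarith
  set r : ℝ := h - (n:ℝ)*h' with hrdef
  have hsplit : S h u = S r (S ((n:ℝ)*h') u) := by
    rw [show h = r + (n:ℝ)*h' by rw [hrdef]; ring]
    exact h_semigroup r ((n:ℝ)*h') hr0 (by positivity) u
  have h1 : dist u (S h u) ≤ dist u (S r u) + L * dist u (S ((n:ℝ)*h') u) := by
    rw [hsplit]
    calc dist u (S r (S ((n:ℝ)*h') u))
        ≤ dist u (S r u) + dist (S r u) (S r (S ((n:ℝ)*h') u)) := dist_triangle _ _ _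
      _ ≤ dist u (S r u) + L * dist u (S ((n:ℝ)*h') u) :=
          add_le_add le_rfl (h_lip _ hr0 _ _)
  have h2 : dist u (S r u) < ε := by
    have hmem : r ∈ Ici (0:ℝ) := hr0
    have hd : dist r 0 < δ := by
      rw [Real.dist_eq, sub_zero, abs_of_nonneg hr0]; linarith
    have := hδ hmem hd
    rw [h_id] at this
    rwa [dist_comm]
  have h3 : dist u (S ((n:ℝ)*h') u) ≤ (n:ℝ) * L * dist u (S h' u) :=
    dist_iterate_aux L S h_id h_semigroup h_lip u h'pos.le n
  have h4 : dist u (S h' u) ≤ c * h' := h'dist.le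
  have hn0 : (0:ℝ) ≤ (n:ℝ) := Nat.cast_nonneg n
  have k1 : L * dist u (S ((n:ℝ)*h') u) ≤ L * ((n:ℝ) * L * dist u (S h' u)) :=
    mul_le_mul_of_nonneg_left h3 hL0
  have k2 : (n:ℝ) * dist u (S h' u) ≤ (n:ℝ) * (c*h') := mul_le_mul_of_nonneg_left h4 hn0
  have k3 : L^2*((n:ℝ)*dist u (S h' u)) ≤ L^2*((n:ℝ)*(c*h')) :=
    mul_le_mul_of_nonneg_left k2 (by positivity)
  have k5 : (n:ℝ)*(c*h') ≤ c*h := by nlinarith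
  have k4 : L^2*((n:ℝ)*(c*h')) ≤ L^2*(c*h) := mul_le_mul_of_nonneg_left k5 (by positivity)
  have k6 : L * ((n:ℝ) * L * dist u (S h' u)) = L^2*((n:ℝ)*dist u (S h' u)) := by ring
  linarith

end AuxSG

set_option maxHeartbeats 2000000 in
/-- **Error formula for Lipschitz semigroups.**
Let `S` be a semigroup on a metric space `D` which is uniformly Lipschitz with
constant `L` in the space variable and has continuous trajectories, and let
`w : [0,T] → D` be Lipschitz continuous.  Then
`d(w(T), S_T w(0)) ≤ L ∫₀^T liminf_{h→0+} d(w(t+h), S_h w(t)) / h dt`,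
the integral on the right being the (upper) Lebesgue integral of the nonnegative
integrand. -/
theorem semigroup_error_formula {D : Type*} [MetricSpace D]
    (L : ℝ) (hL : 1 ≤ L) (S : ℝ → D → D)
    (h_id : ∀ u, S 0 u = u)
    (h_semigroup : ∀ t s : ℝ, 0 ≤ t → 0 ≤ s → ∀ u, S (t + s) u = S t (S s u))
    (h_lip : ∀ t : ℝ, 0 ≤ t → ∀ u v, dist (S t u) (S t v) ≤ L * dist u v)
    (h_cont : ∀ u, ContinuousOn (fun t => S t u) (Ici 0))
    (T : ℝ) (hT : 0 < T) (w : ℝ → D) (K : ℝ)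
    (h_w_lip : ∀ t ∈ Icc 0 T, ∀ s ∈ Icc 0 T, dist (w t) (w s) ≤ K * |t - s|) :
    ENNReal.ofReal (dist (w T) (S T (w 0))) ≤
      ENNReal.ofReal L *
        ∫⁻ t in Icc (0 : ℝ) T,
          Filter.liminf (fun h : ℝ => ENNReal.ofReal (dist (w (t + h)) (S h (w t)) / h))
            (𝓝[>] 0) := by
  classical
  have hL0 : (0:ℝ) ≤ L := zero_le_one.trans hL
  have hL1 : (0:ℝ) < L := lt_of_lt_of_le zero_lt_one hL
  set Φ : ℝ → ℝ≥0∞ := fun t =>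
    Filter.liminf (fun h : ℝ => ENNReal.ofReal (dist (w (t + h)) (S h (w t)) / h)) (𝓝[>] 0)
    with hΦdef
  by_cases hI : (∫⁻ t in Icc (0:ℝ) T, Φ t) = ⊤
  · rw [hI, ENNReal.mul_top (by simp [ENNReal.ofReal_eq_zero]; linarith)]; exact le_top
  set I := ∫⁻ t in Icc (0:ℝ) T, Φ t with hIdef
  set M : ℝ := |K| + 1 with hMdef
  have hM0 : (0:ℝ) < M := by positivity
  have hwlipM : ∀ t ∈ Icc (0:ℝ) T, ∀ s ∈ Icc (0:ℝ) T, dist (w t) (w s) ≤ M * |t - s| := by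
    intro t ht s hs
    refine (h_w_lip t ht s hs).trans ?_
    have hKM : K ≤ M := by rw [hMdef]; have := le_abs_self K; linarith
    exact mul_le_mul_of_nonneg_right hKM (abs_nonneg _)
  set cl : ℝ → ℝ := fun t => min (max t 0) T with hcl
  have hcl_mem : ∀ t, cl t ∈ Icc (0:ℝ) T := by
    intro t
    constructor
    · exact le_min (le_max_right _ _) hT.le
    · exact min_le_right _ _
  have hcl_id : ∀ t ∈ Icc (0:ℝ) T, cl t = t := by
    intro t ht
    rw [hcl]
    simp only
    rw [max_eq_left ht.1, min_eq_left ht.2]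
  have hcl_lip : ∀ a b : ℝ, |cl a - cl b| ≤ |a - b| := by
    intro a b
    rw [hcl]
    simp only
    refine (abs_min_sub_min_le_max _ _ _ _).trans ?_
    have h1 : |max a 0 - max b 0| ≤ |a - b| := abs_max_sub_max_le_abs a b 0
    rw [max_le_iff]
    exact ⟨h1, by simp [abs_nonneg]⟩
  set wc : ℝ → D := fun t => w (cl t) with hwc
  have hwc_lip : ∀ a b : ℝ, dist (wc a) (wc b) ≤ M * |a - b| := by
    intro a b
    refine (hwlipM _ (hcl_mem a) _ (hcl_mem b)).trans ?_
    exact mul_le_mul_of_nonneg_left (hcl_lip a b) hM0.le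
  have hwc_cont : Continuous wc := by
    refine LipschitzWith.continuous (K := ⟨M, hM0.le⟩) (LipschitzWith.of_dist_le_mul ?_)
    intro a b
    exact hwc_lip a b
  have hwc_eq : ∀ t ∈ Icc (0:ℝ) T, wc t = w t := by
    intro t ht; rw [hwc]; simp only; rw [hcl_id t ht]
  set Φm : ℝ → ℝ≥0∞ := fun t => ⨆ (q : ℚ) (_ : (0:ℝ) < (q:ℝ)),
      (Ico (0:ℝ) (T - (q:ℝ))).indicator (fun s => ⨅ (p : ℚ) (_ : (p:ℝ) ∈ Ioo (0:ℝ) (q:ℝ)),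
        ENNReal.ofReal (dist (wc (s + (p:ℝ))) (S (p:ℝ) (wc s)) / (p:ℝ))) t with hΦmdef
  have hΦm_meas : Measurable Φm := by
    rw [hΦmdef]
    apply Measurable.iSup
    intro q
    by_cases hq : (0:ℝ) < (q:ℝ)
    swap
    · simp only [iSup_neg hq]; exact measurable_const
    simp only [hq, iSup_pos]
    refine Measurable.indicator ?_ measurableSet_Ico
    apply Measurable.iInf
    intro p
    by_cases hp : (p:ℝ) ∈ Ioo (0:ℝ) (q:ℝ)
    swap
    · simp only [iInf_neg hp]; exact measurable_const
    simp only [hp, iInf_pos]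
    apply Continuous.measurable
    refine ENNReal.continuous_ofReal.comp ?_
    refine Continuous.div_const ?_ _
    refine Continuous.dist ?_ ?_
    · exact hwc_cont.comp (continuous_id.add continuous_const)
    · have hSc : Continuous (fun u : D => S (p:ℝ) u) := by
        refine LipschitzWith.continuous (K := ⟨L, hL0⟩) (LipschitzWith.of_dist_le_mul ?_)
        intro a b
        exact h_lip _ hp.1.le a b
      exact hSc.comp hwc_cont
  have hΦm_eq : ∀ t ∈ Ico (0:ℝ) T, Φm t = Φ t := by
    intro t ht
    have htT : t < T := ht.2
    have ht0 : (0:ℝ) ≤ t := ht.1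
    set u : ℝ → ℝ≥0∞ := fun h => ENNReal.ofReal (dist (w (t + h)) (S h (w t)) / h) with hu
    have hΦt : Φ t = ⨆ (δ:ℝ) (_ : 0 < δ), ⨅ h ∈ Ioo (0:ℝ) δ, u h := by
      rw [hΦdef]
      exact (nhdsGT_basis (0:ℝ)).liminf_eq_iSup_iInf
    have hueq : ∀ h ∈ Ioo (0:ℝ) (T - t),
        ENNReal.ofReal (dist (wc (t + h)) (S h (wc t)) / h) = u h := by
      intro h hh
      rw [hu]
      simp only
      rw [hwc_eq (t+h) ⟨by linarith [hh.1], by linarith [hh.2]⟩,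
        hwc_eq t (Ico_subset_Icc_self ht)]
    have hucont : ∀ h ∈ Ioo (0:ℝ) (T - t),
        ContinuousAt (fun h' : ℝ => ENNReal.ofReal (dist (wc (t + h')) (S h' (wc t)) / h')) h := by
      intro h hh
      have hreal : ContinuousAt (fun h' : ℝ => dist (wc (t + h')) (S h' (wc t)) / h') h := by
        refine ContinuousAt.div ?_ continuousAt_id (ne_of_gt hh.1)
        refine Filter.Tendsto.dist ?_ ?_
        · exact (hwc_cont.comp (continuous_const.add continuous_id)).continuousAt
        · exact (h_cont (wc t)).continuousAt (Ici_mem_nhds hh.1)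
      exact (ENNReal.continuous_ofReal.tendsto _).comp hreal
    apply le_antisymm
    · apply iSup_le; intro q
      apply iSup_le; intro hq
      by_cases hmem : t ∈ Ico (0:ℝ) (T - (q:ℝ))
      swap
      · rw [indicator_of_notMem hmem]; exact zero_le
      rw [indicator_of_mem hmem]
      have hqT : (q:ℝ) < T - t := by have := hmem.2; linarith
      rw [hΦt]
      refine le_iSup₂_of_le (q:ℝ) hq ?_
      apply le_iInf₂; intro h hh
      have hq_h : (0:ℝ) < (q:ℝ) - h := by linarith [hh.2]
      have hex : ∀ n : ℕ, ∃ p : ℚ, h < (p:ℝ) ∧ (p:ℝ) < h + ((q:ℝ) - h)/(n+1) := by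
        intro n
        refine exists_rat_btwn ?_
        have hpos : (0:ℝ) < ((q:ℝ) - h)/(n+1) := by positivity
        linarith
      choose pn hpn1 hpn2 using hex
      have hpn_mem : ∀ n, (pn n : ℝ) ∈ Ioo (0:ℝ) (q:ℝ) := by
        intro n
        constructor
        · linarith [hh.1, hpn1 n]
        · have h1 : ((q:ℝ) - h)/(n+1) ≤ (q:ℝ) - h := by
            refine div_le_self hq_h.le ?_
            have : (0:ℝ) ≤ (n:ℝ) := Nat.cast_nonneg n
            linarith
          linarith [hpn2 n]
      have hpn_tend : Filter.Tendsto (fun n => (pn n : ℝ)) Filter.atTop (𝓝 h) := by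
        have hup : Filter.Tendsto (fun n : ℕ => h + ((q:ℝ) - h)/(n+1)) Filter.atTop (𝓝 h) := by
          have h5 : Filter.Tendsto (fun n : ℕ => ((q:ℝ) - h) * (1/(n+1))) Filter.atTop
              (𝓝 (((q:ℝ) - h) * 0)) :=
            Filter.Tendsto.const_mul _ tendsto_one_div_add_atTop_nhds_zero_nat
          have h6 : Filter.Tendsto (fun n : ℕ => h + ((q:ℝ) - h) * (1/(n+1))) Filter.atTop
              (𝓝 (h + ((q:ℝ) - h) * 0)) := Filter.Tendsto.const_add _ h5
          simpa [mul_one_div, div_eq_mul_inv] using h6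
        refine tendsto_of_tendsto_of_tendsto_of_le_of_le tendsto_const_nhds hup ?_ ?_
        · intro n; exact (hpn1 n).le
        · intro n; exact (hpn2 n).le
      have hmem2 : ∀ n, (pn n : ℝ) ∈ Ioo (0:ℝ) (T - t) := fun n =>
        ⟨(hpn_mem n).1, lt_trans (hpn_mem n).2 hqT⟩
      have hFn : ∀ n, (⨅ (p:ℚ) (_ : (p:ℝ) ∈ Ioo (0:ℝ) (q:ℝ)),
          ENNReal.ofReal (dist (wc (t + (p:ℝ))) (S ((p:ℝ)) (wc t)) / (p:ℝ))) ≤ u ((pn n : ℝ)) := by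
        intro n
        refine iInf₂_le_of_le (pn n) (hpn_mem n) ?_
        exact (hueq _ (hmem2 n)).le
      have hlim : Filter.Tendsto (fun n => u ((pn n : ℝ))) Filter.atTop (𝓝 (u h)) := by
        have hhm : h ∈ Ioo (0:ℝ) (T - t) := ⟨hh.1, lt_trans hh.2 hqT⟩
        have hc := (hucont h hhm).tendsto.comp hpn_tend
        have hc2 : Filter.Tendsto (fun n => u ((pn n : ℝ))) Filter.atTop
            (𝓝 (ENNReal.ofReal (dist (wc (t + h)) (S h (wc t)) / h))) := by
          refine hc.congr ?_
          intro n
          exact hueq _ (hmem2 n)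
        rw [hueq h hhm] at hc2
        exact hc2
      exact ge_of_tendsto hlim (Filter.Eventually.of_forall hFn)
    · rw [hΦt]
      apply iSup_le; intro δ; apply iSup_le; intro hδ
      obtain ⟨q, hq1, hq2⟩ := exists_rat_btwn (lt_min hδ (by linarith : (0:ℝ) < T - t))
      have hqδ : (q:ℝ) < δ := lt_of_lt_of_le hq2 (min_le_left _ _)
      have hqT : (q:ℝ) < T - t := lt_of_lt_of_le hq2 (min_le_right _ _)
      refine le_iSup₂_of_le q hq1 ?_
      have hmemq : t ∈ Ico (0:ℝ) (T - (q:ℝ)) := ⟨ht.1, by linarith⟩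
      simp only [indicator_of_mem hmemq]
      apply le_iInf₂; intro p hp
      have hpδ : (p:ℝ) ∈ Ioo (0:ℝ) δ := ⟨hp.1, lt_trans hp.2 hqδ⟩
      refine iInf₂_le_of_le (p:ℝ) hpδ ?_
      exact (hueq (p:ℝ) ⟨hp.1, by linarith [hp.2]⟩).ge
  have hΦm_zero : ∀ t, t ∉ Ico (0:ℝ) T → Φm t = 0 := by
    intro t ht
    rw [hΦmdef]
    simp only
    rw [ENNReal.iSup_eq_zero]
    intro q
    rw [ENNReal.iSup_eq_zero]
    intro hq
    apply indicator_of_notMem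
    intro hmem
    exact ht ⟨hmem.1, lt_of_lt_of_le hmem.2 (by linarith)⟩
  have hΦm_int : ∫⁻ t, Φm t ≤ I := by
    have h1 : Φm = (Ico (0:ℝ) T).indicator Φm := by
      funext t
      by_cases ht : t ∈ Ico (0:ℝ) T
      · rw [indicator_of_mem ht]
      · rw [indicator_of_notMem ht, hΦm_zero t ht]
    calc ∫⁻ t, Φm t = ∫⁻ t in Ico (0:ℝ) T, Φm t := by
          conv_lhs => rw [h1]
          exact lintegral_indicator measurableSet_Ico Φm
      _ = ∫⁻ t in Ico (0:ℝ) T, Φ t := by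
          refine lintegral_congr_ae ?_
          filter_upwards [ae_restrict_mem measurableSet_Ico] with t ht
          exact hΦm_eq t ht
      _ ≤ I := by rw [hIdef]; exact lintegral_mono_set Ico_subset_Icc_self
  set g : ℝ → ℝ := fun t => dist (S (T - t) (w t)) (w T) with hgdef
  have hg_cont : ContinuousOn g (Icc 0 T) := by
    intro σ hσ
    have hφ : ContinuousWithinAt (fun t => S (T - t) (w σ)) (Icc 0 T) σ := by
      have hsub : MapsTo (fun t : ℝ => T - t) (Icc 0 T) (Ici 0) := fun t htt => by
        simp only [mem_Ici]; linarith [htt.2]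
      have hTc : ContinuousWithinAt (fun t : ℝ => T - t) (Icc 0 T) σ :=
        (continuous_const.sub continuous_id).continuousWithinAt
      exact ((h_cont (w σ)) (T - σ) (by simp only [mem_Ici]; linarith [hσ.2])).comp hTc hsub
    have hST : Filter.Tendsto (fun t => dist (S (T-t) (w t)) (S (T-σ) (w σ)))
        (𝓝[Icc 0 T] σ) (𝓝 0) := by
      have hbound : ∀ t ∈ Icc (0:ℝ) T, dist (S (T-t) (w t)) (S (T-σ) (w σ)) ≤
          L * (M * |t - σ|) + dist (S (T-t) (w σ)) (S (T-σ) (w σ)) := by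
        intro t htt
        calc dist (S (T-t) (w t)) (S (T-σ) (w σ))
            ≤ dist (S (T-t) (w t)) (S (T-t) (w σ)) + dist (S (T-t) (w σ)) (S (T-σ) (w σ)) :=
              dist_triangle _ _ _
          _ ≤ L * (M * |t - σ|) + dist (S (T-t) (w σ)) (S (T-σ) (w σ)) := by
              have h1 := h_lip (T-t) (by linarith [htt.2]) (w t) (w σ)
              have h2 := hwlipM t htt σ hσ
              have h3 : L * dist (w t) (w σ) ≤ L * (M * |t - σ|) := by
                refine mul_le_mul_of_nonneg_left ?_ hL0
                exact h2
              linarith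
      have htend : Filter.Tendsto (fun t => L * (M * |t - σ|) +
          dist (S (T-t) (w σ)) (S (T-σ) (w σ))) (𝓝[Icc 0 T] σ) (𝓝 0) := by
        have t1 : Filter.Tendsto (fun t : ℝ => L * (M * |t - σ|)) (𝓝[Icc 0 T] σ)
            (𝓝 (L * (M * |σ - σ|))) := by
          refine Filter.Tendsto.const_mul _ (Filter.Tendsto.const_mul _ ?_)
          refine Filter.Tendsto.mono_left ?_ nhdsWithin_le_nhds
          exact (continuous_abs.comp (continuous_id.sub continuous_const)).tendsto σ
        have t1' : Filter.Tendsto (fun t : ℝ => L * (M * |t - σ|)) (𝓝[Icc 0 T] σ) (𝓝 0) := by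
          simpa using t1
        have t2 : Filter.Tendsto (fun t => dist (S (T-t) (w σ)) (S (T-σ) (w σ)))
            (𝓝[Icc 0 T] σ) (𝓝 0) := by
          have h4 := hφ.tendsto
          exact (tendsto_iff_dist_tendsto_zero.mp h4)
        simpa using t1'.add t2
      refine squeeze_zero' ?_ ?_ htend
      · filter_upwards with t; exact dist_nonneg
      · filter_upwards [self_mem_nhdsWithin] with t htt; exact hbound t htt
    have hSTt : Filter.Tendsto (fun t => S (T-t) (w t)) (𝓝[Icc 0 T] σ) (𝓝 (S (T-σ) (w σ))) :=
      tendsto_iff_dist_tendsto_zero.mpr hST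
    have hgt : Filter.Tendsto g (𝓝[Icc 0 T] σ) (𝓝 (g σ)) := by
      rw [hgdef]
      simp only
      exact Filter.Tendsto.dist hSTt tendsto_const_nhds
    exact hgt
  have hg_step : ∀ τ ∈ Icc (0:ℝ) T, ∀ h : ℝ, 0 ≤ h → τ + h ≤ T →
      g τ - g (τ + h) ≤ L * dist (w (τ + h)) (S h (w τ)) := by
    intro τ hτ h hh0 hτh
    have hsg : S (T - τ) (w τ) = S (T - τ - h) (S h (w τ)) := by
      have h2 := h_semigroup (T - τ - h) h (by linarith) hh0 (w τ)
      rw [show T - τ - h + h = T - τ by ring] at h2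
      exact h2
    have htri : dist (S (T-τ) (w τ)) (w T) ≤
        L * dist (S h (w τ)) (w (τ+h)) + dist (S (T-(τ+h)) (w (τ+h))) (w T) := by
      rw [hsg, show T - τ - h = T - (τ+h) by ring]
      calc dist (S (T-(τ+h)) (S h (w τ))) (w T)
          ≤ dist (S (T-(τ+h)) (S h (w τ))) (S (T-(τ+h)) (w (τ+h)))
            + dist (S (T-(τ+h)) (w (τ+h))) (w T) := dist_triangle _ _ _
        _ ≤ L * dist (S h (w τ)) (w (τ+h)) + dist (S (T-(τ+h)) (w (τ+h))) (w T) := by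
            have := h_lip (T-(τ+h)) (by linarith) (S h (w τ)) (w (τ+h))
            linarith
    rw [hgdef]
    simp only
    rw [dist_comm (w (τ+h)) (S h (w τ))]
    linarith
  have hgT : g T = 0 := by
    rw [hgdef]; simp only [sub_self, h_id, dist_self]
  have goodpt : ∀ s ∈ Ico (0:ℝ) T, ∀ r : ℝ, Φ s < ENNReal.ofReal r →
      ∀ δ > (0:ℝ), ∃ h, 0 < h ∧ h < δ ∧ dist (w s) (S h (w s)) < (M + r) * h := by
    intro s hs r hr δ hδ
    have hfreq : ∃ᶠ h in 𝓝[>] (0:ℝ),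
        ENNReal.ofReal (dist (w (s + h)) (S h (w s)) / h) < ENNReal.ofReal r :=
      Filter.frequently_lt_of_liminf_lt (by isBoundedDefault) hr
    have hev : ∀ᶠ h in 𝓝[>] (0:ℝ), h ∈ Ioo (0:ℝ) (min δ (T - s)) :=
      Ioo_mem_nhdsGT_of_mem ⟨le_refl _, lt_min hδ (by linarith [hs.2])⟩
    obtain ⟨h, hlt, hmem⟩ := (hfreq.and_eventually hev).exists
    have hh0 : (0:ℝ) < h := hmem.1
    have hhδ : h < δ := lt_of_lt_of_le hmem.2 (min_le_left _ _)
    have hhT : s + h ≤ T := by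
      have h2 := lt_of_lt_of_le hmem.2 (min_le_right δ (T - s)); linarith
    refine ⟨h, hh0, hhδ, ?_⟩
    have hdr : dist (w (s+h)) (S h (w s)) / h < r := by
      have h0 : (0:ℝ) ≤ dist (w (s+h)) (S h (w s)) / h := by positivity
      exact (ENNReal.ofReal_lt_ofReal_iff_of_nonneg h0).mp hlt
    have he : dist (w (s+h)) (S h (w s)) < r * h := by
      rw [div_lt_iff₀ hh0] at hdr; linarith
    have hw1 : dist (w s) (w (s+h)) ≤ M * h := by
      have h3 := hwlipM s (Ico_subset_Icc_self hs) (s+h) ⟨by linarith [hs.1], hhT⟩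
      calc dist (w s) (w (s+h)) ≤ M * |s - (s+h)| := h3
        _ = M * h := by rw [show s - (s+h) = -h by ring, abs_neg, abs_of_pos hh0]
    calc dist (w s) (S h (w s))
        ≤ dist (w s) (w (s+h)) + dist (w (s+h)) (S h (w s)) := dist_triangle _ _ _
      _ < M * h + r * h := by linarith
      _ = (M + r) * h := by ring
  have badlb : ∀ s ∈ Ico (0:ℝ) T, ∀ r : ℝ, ∀ h : ℝ, 0 < h →
      L^2 * (M + r) * h < dist (w s) (S h (w s)) → ENNReal.ofReal r ≤ Φ s := by
    intro s hs r h hh0 hlt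
    rcases le_or_gt r 0 with hr | hr
    · calc ENNReal.ofReal r = 0 := ENNReal.ofReal_eq_zero.mpr hr
        _ ≤ Φ s := zero_le
    by_contra hcon
    push_neg at hcon
    have hyp : ∀ δ > (0:ℝ), ∃ h', 0 < h' ∧ h' < δ ∧
        dist (w s) (S h' (w s)) < (M + r) * h' := goodpt s hs r hcon
    have hscale := scale_aux L hL S h_id h_semigroup h_lip h_cont (w s)
      (by linarith : (0:ℝ) < M + r) hyp h hh0
    linarith
  set C' : ℝ := L*M*(2 + L + L^2) + 1 with hC'def
  have hC'0 : (0:ℝ) < C' := by positivity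
  have key : ∀ ε : ℝ, 0 < ε →
      ENNReal.ofReal (g 0) ≤ ENNReal.ofReal L * I + ENNReal.ofReal ((L + 2*L^3 + C') * ε) := by
    intro ε hε
    have hεE : ENNReal.ofReal ε ≠ 0 := by
      simp only [ne_eq, ENNReal.ofReal_eq_zero, not_le]; linarith
    have hεE0 : (0:ℝ≥0∞) < ENNReal.ofReal ε := pos_iff_ne_zero.mpr hεE
    have hΦm_fin : ∫⁻ t, Φm t ≠ ⊤ := by
      intro hcontra
      exact hI (top_le_iff.mp (hcontra ▸ hΦm_int))
    obtain ⟨δ₃, hδ₃0, hAC⟩ := exists_pos_setLIntegral_lt_of_measure_lt hΦm_fin hεE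
    have hB_null : volume {t : ℝ | Φm t = ⊤} = 0 := by
      have hae := ae_lt_top hΦm_meas hΦm_fin
      rw [ae_iff] at hae
      have hBeq : {t : ℝ | Φm t = ⊤} = {t : ℝ | ¬ Φm t < ⊤} := by
        ext t; simp [lt_top_iff_ne_top]
      rw [hBeq]; exact hae
    obtain ⟨U, hBU, hUopen, hUvol⟩ := Set.exists_isOpen_lt_of_lt {t : ℝ | Φm t = ⊤}
        (min δ₃ (ENNReal.ofReal ε)) (by rw [hB_null]; exact lt_min hδ₃0 hεE0)
    have hUε : volume U ≤ ENNReal.ofReal ε := (lt_of_lt_of_le hUvol (min_le_right _ _)).le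
    have hUint : ∫⁻ t in U, Φm t < ENNReal.ofReal ε :=
      hAC U (lt_of_lt_of_le hUvol (min_le_left _ _))
    set fNN : ℝ → NNReal :=
      (Ico (0:ℝ) T ∩ {t | Φm t ≠ ⊤}).indicator (fun t => (Φm t).toNNReal) with hfNN
    have hBmeas : MeasurableSet (Ico (0:ℝ) T ∩ {t | Φm t ≠ ⊤}) :=
      measurableSet_Ico.inter (hΦm_meas (measurableSet_singleton ⊤)).compl
    have hfNN_meas : Measurable fNN := by
      refine Measurable.indicator ?_ hBmeas
      exact hΦm_meas.ennreal_toNNReal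
    have hfNN_le : ∀ t, (fNN t : ℝ≥0∞) ≤ Φm t := by
      intro t
      rw [hfNN]
      by_cases htm : t ∈ Ico (0:ℝ) T ∩ {t | Φm t ≠ ⊤}
      · simp only [indicator_of_mem htm]
        rw [ENNReal.coe_toNNReal htm.2]
      · simp only [indicator_of_notMem htm]
        simp
    obtain ⟨G₀, hG₀lt, hG₀lsc, hG₀int⟩ :=
      exists_lt_lowerSemicontinuous_lintegral_ge volume fNN hfNN_meas hεE
    have hG₀I : ∫⁻ t, G₀ t ≤ I + ENNReal.ofReal ε := by
      refine hG₀int.trans ?_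
      exact add_le_add ((lintegral_mono hfNN_le).trans hΦm_int) le_rfl
    set R : ℝ → ℝ≥0∞ := fun τ => ENNReal.ofReal L * (∫⁻ t in Ioc 0 τ, G₀ t)
        + ENNReal.ofReal (2*L^3) * (∫⁻ t in Ioc 0 τ, (U.indicator Φm) t)
        + ENNReal.ofReal C' * volume (U ∩ Ioc 0 τ) with hR
    have hRmono : ∀ a b : ℝ, a ≤ b → R a ≤ R b := by
      intro a b hab
      rw [hR]
      simp only
      refine add_le_add (add_le_add ?_ ?_) ?_
      · exact mul_le_mul_right (lintegral_mono_set (Ioc_subset_Ioc le_rfl hab)) _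
      · exact mul_le_mul_right (lintegral_mono_set (Ioc_subset_Ioc le_rfl hab)) _
      · exact mul_le_mul_right
          (measure_mono (inter_subset_inter_right _ (Ioc_subset_Ioc le_rfl hab))) _
    set A : Set ℝ := {τ | τ ∈ Icc (0:ℝ) T ∧ ENNReal.ofReal (g 0 - g τ) ≤ R τ} with hA
    have h0A : (0:ℝ) ∈ A := by
      refine ⟨⟨le_rfl, hT.le⟩, ?_⟩
      simp
    have hAbdd : BddAbove A := ⟨T, fun x hx => hx.1.2⟩
    have hAne : A.Nonempty := ⟨0, h0A⟩
    set σ := sSup A with hσdef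
    have hσ0 : 0 ≤ σ := le_csSup hAbdd h0A
    have hσT : σ ≤ T := csSup_le hAne (fun x hx => hx.1.2)
    have hσIcc : σ ∈ Icc (0:ℝ) T := ⟨hσ0, hσT⟩
    have hσA : σ ∈ A := by
      obtain ⟨un, hun_mono, hun_tend, hun_mem⟩ := exists_seq_tendsto_sSup hAne hAbdd
      refine ⟨hσIcc, ?_⟩
      have h2 : Filter.Tendsto un Filter.atTop (𝓝[Icc (0:ℝ) T] σ) := by
        refine tendsto_nhdsWithin_iff.mpr ⟨hun_tend, ?_⟩
        exact Filter.Eventually.of_forall (fun n => (hun_mem n).1)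
      have h1 : Filter.Tendsto (fun n => g (un n)) Filter.atTop (𝓝 (g σ)) :=
        ((hg_cont σ hσIcc).tendsto).comp h2
      have h3 : Filter.Tendsto (fun n => ENNReal.ofReal (g 0 - g (un n))) Filter.atTop
          (𝓝 (ENNReal.ofReal (g 0 - g σ))) := by
        refine (ENNReal.continuous_ofReal.tendsto _).comp ?_
        exact Filter.Tendsto.const_sub _ h1
      refine le_of_tendsto h3 ?_
      filter_upwards with n
      exact le_trans (hun_mem n).2 (hRmono _ _ (le_csSup hAbdd (hun_mem n)))
    have hσeqT : σ = T := by
      by_contra hne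
      have hσltT : σ < T := lt_of_le_of_ne hσT hne
      have hσIco : σ ∈ Ico (0:ℝ) T := ⟨hσ0, hσltT⟩
      have hstep : ∃ h : ℝ, 0 < h ∧ σ + h ≤ T ∧
          ENNReal.ofReal (g σ - g (σ+h)) ≤
            ENNReal.ofReal L * (∫⁻ t in Ioc σ (σ+h), G₀ t)
            + ENNReal.ofReal (2*L^3) * (∫⁻ t in Ioc σ (σ+h), (U.indicator Φm) t)
            + ENNReal.ofReal C' * volume (U ∩ Ioc σ (σ+h)) := by
        by_cases hcase : Φm σ = ⊤
        · -- bad point: σ ∈ U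
          have hσU : σ ∈ U := hBU hcase
          obtain ⟨δ₂, hδ₂0, hballU⟩ := Metric.isOpen_iff.mp hUopen σ hσU
          set h := min (δ₂/2) (T - σ) with hhdef
          have hh0 : 0 < h := lt_min (by linarith) (by linarith)
          have hhT : σ + h ≤ T := by
            have := min_le_right (δ₂/2) (T - σ); rw [hhdef]; linarith
          have hIocU : Ioc σ (σ+h) ⊆ U := by
            intro s hsmem
            apply hballU
            rw [Metric.mem_ball, Real.dist_eq]
            have h1 : h ≤ δ₂/2 := min_le_left _ _
            have h2 : |s - σ| = s - σ := abs_of_pos (by linarith [hsmem.1])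
            rw [h2]
            have := hsmem.2
            linarith
          refine ⟨h, hh0, hhT, ?_⟩
          set ρ := dist (w σ) (S h (w σ)) with hρdef
          have hvol : volume (U ∩ Ioc σ (σ+h)) = ENNReal.ofReal h := by
            rw [inter_eq_self_of_subset_right hIocU, Real.volume_Ioc]
            congr 1; ring
          have hwstep : dist (w (σ+h)) (w σ) ≤ M * h := by
            have h3 := hwlipM (σ+h) ⟨by linarith, hhT⟩ σ hσIcc
            calc dist (w (σ+h)) (w σ) ≤ M * |σ + h - σ| := h3
              _ = M * h := by rw [show σ + h - σ = h by ring, abs_of_pos hh0]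
          have hcost0 : g σ - g (σ+h) ≤ L * (M*h + ρ) := by
            refine le_trans (hg_step σ hσIcc h hh0.le hhT) ?_
            refine mul_le_mul_of_nonneg_left ?_ hL0
            calc dist (w (σ+h)) (S h (w σ))
                ≤ dist (w (σ+h)) (w σ) + dist (w σ) (S h (w σ)) := dist_triangle _ _ _
              _ ≤ M*h + ρ := by rw [← hρdef]; linarith
          set r := (ρ/h - (1+L)*M)/L^2 - M with hrdef
          have hL2 : (0:ℝ) < L^2 := by positivity
          have hρr : ρ = ((1+L)*M + L^2*(M + r)) * h := by
            rw [hrdef]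
            field_simp
            ring
          rcases le_or_gt r 0 with hrneg | hrpos
          · -- small defect: only third term needed
            have hcost1 : g σ - g (σ+h) ≤ C' * h := by
              have hρle : ρ ≤ ((1+L)*M + L^2*M) * h := by
                rw [hρr]
                have : L^2*r ≤ 0 := mul_nonpos_of_nonneg_of_nonpos hL2.le hrneg
                nlinarith
              rw [hC'def]
              nlinarith
            refine le_trans (ENNReal.ofReal_le_ofReal hcost1) ?_
            rw [ENNReal.ofReal_mul hC'0.le, ← hvol]
            exact le_add_self
          · -- genuine bad point: lower bound Φ on (σ, σ+h)
            have hΦlb : ∀ s ∈ Ioo σ (σ+h), ENNReal.ofReal (r/2) ≤ Φ s := by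
              intro s hsmem
              have hsIco : s ∈ Ico (0:ℝ) T := ⟨by linarith [hsmem.1], by linarith [hsmem.2]⟩
              refine badlb s hsIco (r/2) h hh0 ?_
              have htrans : ρ ≤ (1+L) * (M * (s - σ)) + dist (w s) (S h (w s)) := by
                have h1 := hwlipM σ hσIcc s (Ico_subset_Icc_self hsIco)
                have h2 := h_lip h hh0.le (w s) (w σ)
                have h3 : |σ - s| = s - σ := by
                  rw [abs_sub_comm]; exact abs_of_pos (by linarith [hsmem.1])
                have h4 : dist (w σ) (w s) ≤ M * (s - σ) := by rw [← h3]; exact h1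
                have h5 : dist (w s) (w σ) ≤ M * (s - σ) := by rw [dist_comm]; exact h4
                calc ρ ≤ dist (w σ) (w s) + dist (w s) (S h (w s))
                      + dist (S h (w s)) (S h (w σ)) := by rw [hρdef]; exact dist_triangle4 _ _ _ _
                  _ ≤ M * (s - σ) + dist (w s) (S h (w s)) + L * (M * (s - σ)) := by
                      have h6 : dist (S h (w s)) (S h (w σ)) ≤ L * (M * (s - σ)) := by
                        refine h2.trans ?_
                        exact mul_le_mul_of_nonneg_left h5 hL0
                      linarith
                  _ = (1+L) * (M * (s - σ)) + dist (w s) (S h (w s)) := by ring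
              have hslth : s - σ ≤ h := by linarith [hsmem.2]
              have hlb : ρ - (1+L)*M*h ≤ dist (w s) (S h (w s)) := by
                have h7a : M * (s - σ) ≤ M * h := mul_le_mul_of_nonneg_left hslth hM0.le
                have h7 : (1+L) * (M * (s - σ)) ≤ (1+L) * (M * h) :=
                  mul_le_mul_of_nonneg_left h7a (by linarith)
                have h8 : (1+L) * (M * h) = (1+L)*M*h := by ring
                linarith
              have hexp : ρ - (1+L)*M*h = L^2*(M + r/2)*h + L^2*(r/2)*h := by
                rw [hρr]; ring
              have hpos2 : 0 < L^2*(r/2)*h := by positivity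
              refine lt_of_lt_of_le ?_ hlb
              rw [hexp]
              exact lt_add_of_pos_right _ hpos2
            have hint2 : ENNReal.ofReal (r/2) * ENNReal.ofReal h ≤
                ∫⁻ t in Ioc σ (σ+h), (U.indicator Φm) t := by
              have hge : (∫⁻ _ in Ioo σ (σ+h), ENNReal.ofReal (r/2)) ≤
                  ∫⁻ t in Ioo σ (σ+h), (U.indicator Φm) t := by
                refine lintegral_mono_ae ?_
                rw [ae_restrict_iff' measurableSet_Ioo]
                refine Filter.Eventually.of_forall ?_
                intro s hsmem
                have hsIoc : s ∈ Ioc σ (σ+h) := ⟨hsmem.1, hsmem.2.le⟩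
                have hsU : s ∈ U := hIocU hsIoc
                have hsIco : s ∈ Ico (0:ℝ) T := ⟨by linarith [hsmem.1], by linarith [hsmem.2]⟩
                rw [indicator_of_mem hsU, hΦm_eq s hsIco]
                exact hΦlb s hsmem
              calc ENNReal.ofReal (r/2) * ENNReal.ofReal h
                  = ∫⁻ _ in Ioo σ (σ+h), ENNReal.ofReal (r/2) := by
                    rw [setLIntegral_const, Real.volume_Ioo, show σ + h - σ = h by ring]
                _ ≤ ∫⁻ t in Ioo σ (σ+h), (U.indicator Φm) t := hge
                _ ≤ ∫⁻ t in Ioc σ (σ+h), (U.indicator Φm) t :=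
                    lintegral_mono_set Ioo_subset_Ioc_self
            have hid : L*(M*h + ρ) = C' * h - h + (2*L^3)*((r/2)*h) := by
              rw [hρr, hC'def]; ring
            have hcost2 : g σ - g (σ+h) ≤ (2*L^3)*((r/2)*h) + C'*h := by
              rw [hid] at hcost0; linarith
            refine le_trans (ENNReal.ofReal_le_ofReal hcost2) ?_
            refine le_trans ENNReal.ofReal_add_le ?_
            have hterm2 : ENNReal.ofReal ((2*L^3)*((r/2)*h)) ≤
                ENNReal.ofReal (2*L^3) * (∫⁻ t in Ioc σ (σ+h), (U.indicator Φm) t) := by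
              rw [ENNReal.ofReal_mul (by positivity : (0:ℝ) ≤ 2*L^3),
                ENNReal.ofReal_mul (by positivity : (0:ℝ) ≤ r/2)]
              exact mul_le_mul_right hint2 _
            have hterm3 : ENNReal.ofReal (C'*h) ≤
                ENNReal.ofReal C' * volume (U ∩ Ioc σ (σ+h)) := by
              rw [ENNReal.ofReal_mul hC'0.le, hvol]
            calc ENNReal.ofReal ((2*L^3)*((r/2)*h)) + ENNReal.ofReal (C'*h)
                ≤ ENNReal.ofReal (2*L^3) * (∫⁻ t in Ioc σ (σ+h), (U.indicator Φm) t)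
                  + ENNReal.ofReal C' * volume (U ∩ Ioc σ (σ+h)) := add_le_add hterm2 hterm3
              _ ≤ _ := add_le_add (le_add_self) le_rfl
        · -- good point
          have hfσ : (fNN σ : ℝ≥0∞) = Φ σ := by
            have hmem : σ ∈ Ico (0:ℝ) T ∩ {t | Φm t ≠ ⊤} := ⟨hσIco, hcase⟩
            rw [hfNN]
            simp only [indicator_of_mem hmem]
            rw [ENNReal.coe_toNNReal hcase, hΦm_eq σ hσIco]
          have hΦσG : Φ σ < G₀ σ := by rw [← hfσ]; exact hG₀lt σ
          obtain ⟨b, hb0, hb1, hb2⟩ := ENNReal.lt_iff_exists_real_btwn.mp hΦσG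
          have hev : ∀ᶠ s in 𝓝 σ, ENNReal.ofReal b < G₀ s := hG₀lsc σ (ENNReal.ofReal b) hb2
          obtain ⟨δ₁, hδ₁0, hδ₁⟩ := Metric.eventually_nhds_iff.mp hev
          have hfreq : ∃ᶠ h in 𝓝[>] (0:ℝ),
              ENNReal.ofReal (dist (w (σ + h)) (S h (w σ)) / h) < ENNReal.ofReal b :=
            Filter.frequently_lt_of_liminf_lt (by isBoundedDefault) hb1
          have hev2 : ∀ᶠ h in 𝓝[>] (0:ℝ), h ∈ Ioo (0:ℝ) (min δ₁ (T - σ)) :=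
            Ioo_mem_nhdsGT_of_mem ⟨le_refl _, lt_min hδ₁0 (by linarith)⟩
          obtain ⟨h, hlt, hmemh⟩ := (hfreq.and_eventually hev2).exists
          have hh0 : 0 < h := hmemh.1
          have hhδ₁ : h < δ₁ := lt_of_lt_of_le hmemh.2 (min_le_left _ _)
          have hhT : σ + h ≤ T := by
            have h9 := lt_of_lt_of_le hmemh.2 (min_le_right _ _)
            linarith
          refine ⟨h, hh0, hhT, ?_⟩
          have he : dist (w (σ+h)) (S h (w σ)) ≤ b * h := by
            have h0 : (0:ℝ) ≤ dist (w (σ+h)) (S h (w σ)) / h := by positivity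
            have h1 := (ENNReal.ofReal_lt_ofReal_iff_of_nonneg h0).mp hlt
            rw [div_lt_iff₀ hh0] at h1
            linarith
          have hcost1 : g σ - g (σ+h) ≤ L * (b*h) := by
            refine le_trans (hg_step σ hσIcc h hh0.le hhT) ?_
            exact mul_le_mul_of_nonneg_left he hL0
          have hint : ENNReal.ofReal b * ENNReal.ofReal h ≤ ∫⁻ t in Ioc σ (σ+h), G₀ t := by
            have hle : ∀ᵐ t ∂(volume.restrict (Ioc σ (σ+h))), ENNReal.ofReal b ≤ G₀ t := by
              rw [ae_restrict_iff' measurableSet_Ioc]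
              refine Filter.Eventually.of_forall ?_
              intro s hsmem
              refine (hδ₁ ?_).le
              rw [Real.dist_eq, abs_of_pos (by linarith [hsmem.1] : (0:ℝ) < s - σ)]
              linarith [hsmem.2]
            calc ENNReal.ofReal b * ENNReal.ofReal h
                = ∫⁻ _ in Ioc σ (σ+h), ENNReal.ofReal b := by
                  rw [setLIntegral_const, Real.volume_Ioc, show σ + h - σ = h by ring]
              _ ≤ ∫⁻ t in Ioc σ (σ+h), G₀ t := lintegral_mono_ae hle
          calc ENNReal.ofReal (g σ - g (σ+h)) ≤ ENNReal.ofReal (L * (b*h)) :=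
                ENNReal.ofReal_le_ofReal hcost1
            _ = ENNReal.ofReal L * (ENNReal.ofReal b * ENNReal.ofReal h) := by
                rw [ENNReal.ofReal_mul hL0, ENNReal.ofReal_mul hb0]
            _ ≤ ENNReal.ofReal L * (∫⁻ t in Ioc σ (σ+h), G₀ t) := mul_le_mul_right hint _
            _ ≤ _ := le_add_right (le_add_right le_rfl)
      obtain ⟨h, hh0, hhT2, hcost⟩ := hstep
      have hsplit1 : (∫⁻ t in Ioc (0:ℝ) (σ+h), G₀ t)
          = (∫⁻ t in Ioc (0:ℝ) σ, G₀ t) + ∫⁻ t in Ioc σ (σ+h), G₀ t := by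
        rw [← Ioc_union_Ioc_eq_Ioc hσ0 (by linarith : σ ≤ σ + h),
          lintegral_union measurableSet_Ioc (Ioc_disjoint_Ioc_of_le le_rfl)]
      have hsplit2 : (∫⁻ t in Ioc (0:ℝ) (σ+h), (U.indicator Φm) t)
          = (∫⁻ t in Ioc (0:ℝ) σ, (U.indicator Φm) t)
            + ∫⁻ t in Ioc σ (σ+h), (U.indicator Φm) t := by
        rw [← Ioc_union_Ioc_eq_Ioc hσ0 (by linarith : σ ≤ σ + h),
          lintegral_union measurableSet_Ioc (Ioc_disjoint_Ioc_of_le le_rfl)]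
      have hsplit3 : volume (U ∩ Ioc (0:ℝ) (σ+h))
          = volume (U ∩ Ioc (0:ℝ) σ) + volume (U ∩ Ioc σ (σ+h)) := by
        rw [← Ioc_union_Ioc_eq_Ioc hσ0 (by linarith : σ ≤ σ + h), inter_union_distrib_left,
          measure_union (Disjoint.mono inter_subset_right inter_subset_right
            (Ioc_disjoint_Ioc_of_le le_rfl)) (hUopen.measurableSet.inter measurableSet_Ioc)]
      have hRsum : R (σ+h) = R σ + (ENNReal.ofReal L * (∫⁻ t in Ioc σ (σ+h), G₀ t)
            + ENNReal.ofReal (2*L^3) * (∫⁻ t in Ioc σ (σ+h), (U.indicator Φm) t)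
            + ENNReal.ofReal C' * volume (U ∩ Ioc σ (σ+h))) := by
        rw [hR]
        simp only
        rw [hsplit1, hsplit2, hsplit3, mul_add, mul_add, mul_add]
        ring
      have hPnew : σ + h ∈ A := by
        refine ⟨⟨by linarith, hhT2⟩, ?_⟩
        calc ENNReal.ofReal (g 0 - g (σ+h))
            = ENNReal.ofReal ((g 0 - g σ) + (g σ - g (σ+h))) := by
              rw [show (g 0 - g σ) + (g σ - g (σ+h)) = g 0 - g (σ+h) by ring]
          _ ≤ ENNReal.ofReal (g 0 - g σ) + ENNReal.ofReal (g σ - g (σ+h)) :=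
              ENNReal.ofReal_add_le
          _ ≤ R σ + (ENNReal.ofReal L * (∫⁻ t in Ioc σ (σ+h), G₀ t)
              + ENNReal.ofReal (2*L^3) * (∫⁻ t in Ioc σ (σ+h), (U.indicator Φm) t)
              + ENNReal.ofReal C' * volume (U ∩ Ioc σ (σ+h))) := add_le_add hσA.2 hcost
          _ = R (σ+h) := hRsum.symm
      have hle := le_csSup hAbdd hPnew
      rw [← hσdef] at hle
      linarith
    have hPT : ENNReal.ofReal (g 0 - g T) ≤ R T := by rw [← hσeqT]; exact hσA.2
    rw [hgT, sub_zero] at hPT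
    refine hPT.trans ?_
    have hterm1 : (∫⁻ t in Ioc (0:ℝ) T, G₀ t) ≤ I + ENNReal.ofReal ε :=
      (setLIntegral_le_lintegral _ _).trans hG₀I
    have hterm2 : (∫⁻ t in Ioc (0:ℝ) T, (U.indicator Φm) t) ≤ ENNReal.ofReal ε := by
      refine le_trans (setLIntegral_le_lintegral _ _) ?_
      rw [lintegral_indicator hUopen.measurableSet]
      exact hUint.le
    have hterm3 : volume (U ∩ Ioc (0:ℝ) T) ≤ ENNReal.ofReal ε :=
      (measure_mono inter_subset_left).trans hUε
    have hofadd : ENNReal.ofReal L * ENNReal.ofReal ε + ENNReal.ofReal (2*L^3) * ENNReal.ofReal ε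
        + ENNReal.ofReal C' * ENNReal.ofReal ε = ENNReal.ofReal ((L + 2*L^3 + C') * ε) := by
      rw [← ENNReal.ofReal_mul hL0, ← ENNReal.ofReal_mul (show (0:ℝ) ≤ 2*L^3 by positivity),
        ← ENNReal.ofReal_mul hC'0.le,
        ← ENNReal.ofReal_add (by positivity) (by positivity),
        ← ENNReal.ofReal_add (by positivity) (by positivity)]
      congr 1; ring
    rw [hR]
    simp only
    calc ENNReal.ofReal L * (∫⁻ t in Ioc (0:ℝ) T, G₀ t)
        + ENNReal.ofReal (2*L^3) * (∫⁻ t in Ioc (0:ℝ) T, (U.indicator Φm) t)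
        + ENNReal.ofReal C' * volume (U ∩ Ioc (0:ℝ) T)
        ≤ ENNReal.ofReal L * (I + ENNReal.ofReal ε)
          + ENNReal.ofReal (2*L^3) * ENNReal.ofReal ε
          + ENNReal.ofReal C' * ENNReal.ofReal ε :=
          add_le_add (add_le_add (mul_le_mul_right hterm1 _) (mul_le_mul_right hterm2 _))
            (mul_le_mul_right hterm3 _)
      _ = ENNReal.ofReal L * I + (ENNReal.ofReal L * ENNReal.ofReal ε
          + ENNReal.ofReal (2*L^3) * ENNReal.ofReal ε
          + ENNReal.ofReal C' * ENNReal.ofReal ε) := by ring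
      _ = ENNReal.ofReal L * I + ENNReal.ofReal ((L + 2*L^3 + C') * ε) := by rw [hofadd]
  have hconc : ENNReal.ofReal (g 0) ≤ ENNReal.ofReal L * I := by
    have hIne : ENNReal.ofReal L * I ≠ ⊤ := by
      exact ENNReal.mul_ne_top ENNReal.ofReal_ne_top hI
    refine ge_of_tendsto (x := 𝓝[>] (0:ℝ))
      (f := fun ε : ℝ => ENNReal.ofReal L * I + ENNReal.ofReal ((L + 2*L^3 + C') * ε)) ?_ ?_
    · have h1 : Filter.Tendsto (fun ε : ℝ => (L + 2*L^3 + C') * ε) (𝓝[>] 0) (𝓝 0) := by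
        have h0 : Filter.Tendsto (fun e : ℝ => (L + 2*L^3 + C') * e) (𝓝 0)
            (𝓝 ((L + 2*L^3 + C') * 0)) := Filter.Tendsto.const_mul _ (fun _ a => a)
        rw [mul_zero] at h0
        exact h0.mono_left nhdsWithin_le_nhds
      have h2 : Filter.Tendsto (fun ε : ℝ => ENNReal.ofReal ((L + 2*L^3 + C') * ε)) (𝓝[>] 0)
          (𝓝 0) := by
        have := (ENNReal.continuous_ofReal.tendsto 0).comp h1
        simpa [Function.comp_def] using this
      have h3 := Filter.Tendsto.const_add (ENNReal.ofReal L * I) h2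
      simpa using h3
    · filter_upwards [self_mem_nhdsWithin] with ε hε
      exact key ε hε
  have hfin : dist (w T) (S T (w 0)) = g 0 := by
    rw [hgdef]; simp only [sub_zero]; exact dist_comm _ _
  rw [hfin]
  exact hconc
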